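/- Let Σ = Σ_1 ∪ ⋯ ∪ Σ_k be a partition of the alphabet into pairwise disjoint nonempty blocks and suppose L ⊆ Σ* satisfies L = π_{Σ_1}(L) ⧢ π_{Σ_2}(L) ⧢ ⋯ ⧢ π_{Σ_k}(L). Then for each i ∈ {1,…,k} and all u, v ∈ Σ_i*: u ≡_L v (Nerode right-congruence of L over Σ) if and only if for all x ∈ Σ_i*: ux ∈ π_{Σ_i}(L) ↔ vx ∈ π_{Σ_i}(L). (This establishes the inclusion 𝓛_2 ⊆ 𝓛_3 of the paper's language classes.) -/
import Mathlib


/-- The Nerode right-congruence of a language `L`: `u ≡_L v` iff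
for all words `x`, `u ++ x ∈ L ↔ v ++ x ∈ L`. -/
def NerodeEq {α : Type*} (L : Set (List α)) (u v : List α) : Prop :=
  ∀ x : List α, u ++ x ∈ L ↔ v ++ x ∈ L

/-- The Nerode right-congruence as a setoid on words. -/
def nerodeSetoid {α : Type*} (L : Set (List α)) : Setoid (List α) where
  r := NerodeEq L
  iseqv := ⟨fun _ _ => Iff.rfl, fun h x => (h x).symm, fun h1 h2 x => (h1 x).trans (h2 x)⟩

/-- A language is regular iff its Nerode right-congruence has finitely many classes. -/
def RegularLang {α : Type*} (L : Set (List α)) : Prop :=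
  Finite (Quotient (nerodeSetoid L))

/-- The state complexity of `L`: the number of Nerode right-congruence classes. -/
noncomputable def sc {α : Type*} (L : Set (List α)) : ℕ :=
  Nat.card (Quotient (nerodeSetoid L))

/-- A language is commutative if membership only depends on the number of
occurrences of each letter. -/
def CommutativeLang {α : Type*} [DecidableEq α] (L : Set (List α)) : Prop :=
  ∀ u v : List α, (∀ x : α, u.count x = v.count x) → (u ∈ L ↔ v ∈ L)

/-- A (commutative) language has a product-form minimal automaton iff for all words
`u, v`: `u ≡_L v` holds if and only if `x^{|u|_x} ≡_L x^{|v|_x}` for every letter `x`. -/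
def HasProductForm {α : Type*} [DecidableEq α] (L : Set (List α)) : Prop :=
  ∀ u v : List α,
    NerodeEq L u v ↔
      ∀ x : α, NerodeEq L (List.replicate (u.count x) x) (List.replicate (v.count x) x)

/-- `IsShuffleOf u v w` holds iff `w` is an interleaving `x₁y₁x₂y₂⋯xₙyₙ`
with `u = x₁⋯xₙ` and `v = y₁⋯yₙ`. -/
inductive IsShuffleOf {α : Type*} : List α → List α → List α → Prop
  | nil : IsShuffleOf [] [] []
  | left {u v w : List α} {a : α} : IsShuffleOf u v w → IsShuffleOf (a :: u) v (a :: w)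
  | right {u v w : List α} {a : α} : IsShuffleOf u v w → IsShuffleOf u (a :: v) (a :: w)

/-- The shuffle of two languages. -/
def shuffleLang {α : Type*} (U V : Set (List α)) : Set (List α) :=
  {w | ∃ u ∈ U, ∃ v ∈ V, IsShuffleOf u v w}

/-- The iterated shuffle `L₁ ⧢ L₂ ⧢ ⋯ ⧢ Lₙ` of a list of languages
(`{ε}` is the neutral element of the shuffle). -/
def shuffles {α : Type*} (Ls : List (Set (List α))) : Set (List α) :=
  Ls.foldr shuffleLang {[]}

/-- With a partition of the alphabet encoded by a coloring `c : α → Fin k`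
(block `Σ_i = c⁻¹(i)`), `projC c i w` is the projection `π_{Σ_i}(w)`. -/
def projC {α : Type*} {k : ℕ} (c : α → Fin k) (i : Fin k) (w : List α) : List α :=
  w.filter (fun x => c x = i)

/-- `L` is closed under the partial commutation associated with the partition
encoded by `c : α → Fin k`: letters in distinct blocks commute. -/
def PartialCommClosed {α : Type*} {k : ℕ} (c : α → Fin k) (L : Set (List α)) : Prop :=
  ∀ x y : α, c x ≠ c y → ∀ u v : List α,
    (u ++ x :: y :: v ∈ L ↔ u ++ y :: x :: v ∈ L)

section Aux

variable {α : Type*} {k : ℕ}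

lemma isShuffleOf_filter (p : α → Bool) (w : List α) :
    IsShuffleOf (w.filter p) (w.filter (fun a => !(p a))) w := by
  induction w with
  | nil => exact .nil
  | cons a w ih =>
    by_cases h : p a
    · simpa [List.filter_cons, h] using IsShuffleOf.left ih
    · simpa [List.filter_cons, h] using IsShuffleOf.right ih

lemma projC_append (c : α → Fin k) (i : Fin k) (u v : List α) :
    projC c i (u ++ v) = projC c i u ++ projC c i v :=
  List.filter_append u v

lemma projC_eq_self {c : α → Fin k} {i : Fin k} {u : List α} (h : ∀ a ∈ u, c a = i) :
    projC c i u = u :=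
  List.filter_eq_self.mpr (fun a ha => by simp [h a ha])

lemma projC_eq_nil {c : α → Fin k} {i : Fin k} {u : List α} (h : ∀ a ∈ u, c a ≠ i) :
    projC c i u = [] :=
  List.filter_eq_nil_iff.mpr (fun a ha => by simp [h a ha])

lemma mem_projC {c : α → Fin k} {i : Fin k} {w : List α} {a : α}
    (ha : a ∈ projC c i w) : c a = i := by
  have := List.of_mem_filter ha; simpa using this

lemma projC_filter_not (c : α → Fin k) (i : Fin k) (w : List α) :
    projC c i (w.filter (fun a => !(decide (c a = i)))) = [] :=
  projC_eq_nil (fun a ha => by have := List.of_mem_filter ha; simpa using this)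

lemma projC_filter_ne {c : α → Fin k} {i j : Fin k} (h : j ≠ i) (w : List α) :
    projC c j (w.filter (fun a => !(decide (c a = i)))) = projC c j w := by
  unfold projC
  rw [List.filter_filter]
  apply List.filter_congr
  intro a _
  by_cases hc : c a = j
  · simp [hc, h]
  · simp [hc]

lemma mem_shuffles_map (c : α → Fin k) (f : Fin k → Set (List α)) :
    ∀ l : List (Fin k), l.Nodup → ∀ w : List α,
      (∀ j ∈ l, projC c j w ∈ f j) → (∀ a ∈ w, c a ∈ l) →
      w ∈ shuffles (l.map f) := by
  intro l
  induction l with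
  | nil =>
    intro _ w _ hcov
    have hw : w = [] := by
      cases w with
      | nil => rfl
      | cons a w => exact absurd (hcov a (by simp)) (by simp)
    simp [shuffles, hw]
  | cons j l ih =>
    intro hnd w hproj hcov
    obtain ⟨hjl, hnd'⟩ := List.nodup_cons.mp hnd
    refine ⟨w.filter (fun a => decide (c a = j)), hproj j (by simp),
      w.filter (fun a => !(decide (c a = j))), ?_, isShuffleOf_filter _ _⟩
    apply ih hnd'
    · intro j' hj'
      have hne : j' ≠ j := fun h => hjl (h ▸ hj')
      rw [projC_filter_ne hne]
      exact hproj j' (by simp [hj'])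
    · intro a ha
      have h1 := hcov a (List.mem_of_mem_filter ha)
      have h2 : ¬ (c a = j) := by have := List.of_mem_filter ha; simpa using this
      simp only [List.mem_cons] at h1
      exact h1.resolve_left h2

lemma mem_of_projections {c : α → Fin k} {L : Set (List α)}
    (hL : L = shuffles (List.ofFn fun i : Fin k => projC c i '' L))
    {w : List α} (h : ∀ j, projC c j w ∈ projC c j '' L) : w ∈ L := by
  rw [hL, List.ofFn_eq_map]
  exact mem_shuffles_map c _ _ (List.nodup_finRange k) w (fun j _ => h j)
    (fun a _ => List.mem_finRange _)

end Aux

/-- If `L = π_{Σ_1}(L) ⧢ ⋯ ⧢ π_{Σ_k}(L)` for the partition `Σ = Σ_1 ∪ ⋯ ∪ Σ_k`, then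
for each `i` and all `u, v ∈ Σ_i*`: `u ≡_L v` (over `Σ`) iff `u` and `v` are
Nerode-equivalent for `π_{Σ_i}(L)` over the alphabet `Σ_i` (the inclusion `𝓛₂ ⊆ 𝓛₃`). -/
theorem stmt18 {α : Type*} {k : ℕ} (c : α → Fin k) (hsurj : Function.Surjective c)
    (L : Set (List α))
    (hL : L = shuffles (List.ofFn fun i : Fin k => projC c i '' L))
    (i : Fin k) (u v : List α)
    (hu : ∀ x ∈ u, c x = i) (hv : ∀ x ∈ v, c x = i) :
    NerodeEq L u v ↔
      ∀ x : List α, (∀ y ∈ x, c y = i) →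
        (u ++ x ∈ projC c i '' L ↔ v ++ x ∈ projC c i '' L) := by
  constructor
  · intro hne
    have key : ∀ u' v' : List α, (∀ y ∈ u', c y = i) → (∀ y ∈ v', c y = i) →
        NerodeEq L u' v' → ∀ x : List α, (∀ y ∈ x, c y = i) →
        u' ++ x ∈ projC c i '' L → v' ++ x ∈ projC c i '' L := by
      rintro u' v' hu' hv' hne' x hx ⟨w, hwL, hwp⟩
      set z := w.filter (fun a => !(decide (c a = i))) with hz
      have hmem : u' ++ (x ++ z) ∈ L := by
        apply mem_of_projections hL
        intro j
        by_cases hj : j = i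
        · subst j
          have e : projC c i (u' ++ (x ++ z)) = u' ++ x := by
            rw [projC_append, projC_append, projC_eq_self hu', projC_eq_self hx,
              hz, projC_filter_not, List.append_nil]
          rw [e]
          exact ⟨w, hwL, hwp⟩
        · have e : projC c j (u' ++ (x ++ z)) = projC c j w := by
            rw [projC_append, projC_append,
              projC_eq_nil (u := u') (fun a ha => by rw [hu' a ha]; exact fun h => hj h.symm),
              projC_eq_nil (u := x) (fun a ha => by rw [hx a ha]; exact fun h => hj h.symm),
              hz, projC_filter_ne hj, List.nil_append, List.nil_append]
          rw [e]
          exact ⟨w, hwL, rfl⟩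
      have hmem' : v' ++ (x ++ z) ∈ L := (hne' (x ++ z)).mp hmem
      refine ⟨v' ++ (x ++ z), hmem', ?_⟩
      rw [projC_append, projC_append, projC_eq_self hv', projC_eq_self hx,
        hz, projC_filter_not, List.append_nil]
    intro x hx
    exact ⟨key u v hu hv hne x hx,
      key v u hv hu (fun y => (hne y).symm) x hx⟩
  · intro h
    have key : ∀ u' v' : List α, (∀ y ∈ u', c y = i) → (∀ y ∈ v', c y = i) →
        (∀ x : List α, (∀ y ∈ x, c y = i) →
          (u' ++ x ∈ projC c i '' L → v' ++ x ∈ projC c i '' L)) →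
        ∀ x : List α, u' ++ x ∈ L → v' ++ x ∈ L := by
      intro u' v' hu' hv' h' x hux
      apply mem_of_projections hL
      intro j
      by_cases hj : j = i
      · subst j
        have e : projC c i (v' ++ x) = v' ++ projC c i x := by
          rw [projC_append, projC_eq_self hv']
        rw [e]
        apply h' (projC c i x) (fun y hy => mem_projC hy)
        have e2 : u' ++ projC c i x = projC c i (u' ++ x) := by
          rw [projC_append, projC_eq_self hu']
        rw [e2]
        exact ⟨u' ++ x, hux, rfl⟩
      · have e : projC c j (v' ++ x) = projC c j (u' ++ x) := by
          rw [projC_append, projC_append,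
            projC_eq_nil (u := v') (fun a ha => by rw [hv' a ha]; exact fun hh => hj hh.symm),
            projC_eq_nil (u := u') (fun a ha => by rw [hu' a ha]; exact fun hh => hj hh.symm)]
        rw [e]
        exact ⟨u' ++ x, hux, rfl⟩
    intro x
    exact ⟨key u v hu hv (fun x hx => (h x hx).mp) x,
      key v u hv hu (fun x hx => (h x hx).mpr) x⟩
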